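/- Let P ⊆ ℝ² be a polytope (the convex hull of a nonempty finite set of points) such that every point of P has nonnegative second coordinate, or every point of P has nonpositive second coordinate. Let A₂·P denote the image of P under the matrix A₂ = [[1,1],[0,1]]. Then the number of extreme points of conv(P ∪ A₂·P) is at most the number of extreme points of P plus 2. -/

import Mathlib

open Matrix Set

noncomputable section

/-- `XSeq S a k` is the set of all vectors `T_{k-1} ⋯ T_0 · a` with each `T_j ∈ S`
(and `XSeq S a 0 = {a}`). -/
def XSeq {n : ℕ} (S : Set (Matrix (Fin n) (Fin n) ℝ)) (a : Fin n → ℝ) : ℕ → Set (Fin n → ℝ)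
  | 0 => {a}
  | k + 1 => ⋃ A ∈ S, A.mulVec '' XSeq S a k

/-- `PHull S a k` is the convex hull of `XSeq S a k`. -/
def PHull {n : ℕ} (S : Set (Matrix (Fin n) (Fin n) ℝ)) (a : Fin n → ℝ) (k : ℕ) :
    Set (Fin n → ℝ) :=
  convexHull ℝ (XSeq S a k)

/-- `EPts S a k` is the set of extreme points of `PHull S a k`. -/
def EPts {n : ℕ} (S : Set (Matrix (Fin n) (Fin n) ℝ)) (a : Fin n → ℝ) (k : ℕ) :
    Set (Fin n → ℝ) :=
  Set.extremePoints ℝ (PHull S a k)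

/-- `NExt S a k` is the number of extreme points of `PHull S a k`. -/
def NExt {n : ℕ} (S : Set (Matrix (Fin n) (Fin n) ℝ)) (a : Fin n → ℝ) (k : ℕ) : ℕ :=
  (EPts S a k).ncard

def M1 : Matrix (Fin 2) (Fin 2) ℝ := !![0, 1; 1, 0]
def M2 : Matrix (Fin 2) (Fin 2) ℝ := !![1, 1; 0, 1]
def M3 : Matrix (Fin 2) (Fin 2) ℝ := !![1, 0; 1, 1]
def M4 : Matrix (Fin 2) (Fin 2) ℝ := !![1, 1; 1, 0]
def M5 : Matrix (Fin 2) (Fin 2) ℝ := !![0, 1; 1, 1]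

/-!
Write `A = M2` and `Q = conv (P ∪ A P)`. Every extreme point of `Q` is either an extreme point of
`P`, or `A v ∉ P` for an extreme point `v` of `P`; counting these two kinds separately
overcounts only the extreme points `v` of `P` for which both `v` and `A v ≠ v` are extreme in `Q`.
Since `A` moves every point of a horizontal line by the same vector, such a `v` is the only point
of `P` at its height: any other `p` would force both `p` and `A p` into the segment `[v, A v]`.
An extreme point of a convex set that is alone on its level line of a linear functional minimises
or maximises that functional, so there are at most two such `v`.
-/

section Convex

variable {𝕜 E : Type*} [Field 𝕜] [LinearOrder 𝕜] [IsStrictOrderedRing 𝕜]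
  [AddCommGroup E] [Module 𝕜 E]

theorem mem_extremePoints_of_map_mem_extremePoints {F : Type*} [AddCommGroup F] [Module 𝕜 F]
    {g : E →ₗ[𝕜] F} (hg : Function.Injective g) {P : Set E} {Q : Set F} (hPQ : g '' P ⊆ Q)
    {v : E} (hv : v ∈ P) (hgv : g v ∈ Q.extremePoints 𝕜) : v ∈ P.extremePoints 𝕜 := by
  refine ⟨hv, fun x₁ h₁ x₂ h₂ hseg => hg (hgv.2 (hPQ (mem_image_of_mem g h₁))
    (hPQ (mem_image_of_mem g h₂)) ?_)⟩
  have himage := image_openSegment 𝕜 g.toAffineMap x₁ x₂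
  rw [LinearMap.coe_toAffineMap] at himage
  exact himage ▸ mem_image_of_mem g hseg

theorem mem_Icc_of_add_smul_mem {Q : Set E} {v d : E} {s : 𝕜} (hv : v ∈ Q.extremePoints 𝕜)
    (hvd : v + d ∈ Q.extremePoints 𝕜) (hd : d ≠ 0) (hs : v + s • d ∈ Q) : s ∈ Icc 0 1 := by
  by_contra hs'
  rw [mem_Icc, not_and_or, not_le, not_le] at hs'
  rcases hs' with hneg | hgt
  · have hseg : v ∈ openSegment 𝕜 (v + s • d) (v + d) := by
      have h1s : 1 - s ≠ 0 := by linarith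
      refine ⟨1 / (1 - s), -s / (1 - s), div_pos one_pos (by linarith),
        div_pos (by linarith) (by linarith), by field_simp; ring, ?_⟩
      match_scalars <;> field_simp <;> ring
    have hsd : s • d = 0 := by simpa using hv.2 hs hvd.1 hseg
    exact hneg.ne (smul_eq_zero.1 hsd |>.resolve_right hd)
  · have hseg : v + d ∈ openSegment 𝕜 v (v + s • d) := by
      have hs0 : s ≠ 0 := by linarith
      refine ⟨1 - 1 / s, 1 / s, by rw [sub_pos, div_lt_one] <;> linarith, by positivity,
        by ring, ?_⟩
      match_scalars
      · field_simp
        ring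
      · field_simp
    exact hd (by simpa using (hvd.2 hv.1 hs hseg).symm)

theorem isMinOn_or_isMaxOn_of_mem_extremePoints {P : Set E} (hP : Convex 𝕜 P) (f : E →ₗ[𝕜] 𝕜)
    {x : E} (hx : x ∈ P.extremePoints 𝕜) (huniq : ∀ p ∈ P, f p = f x → p = x) :
    IsMinOn f P x ∨ IsMaxOn f P x := by
  by_contra h
  simp only [not_or, isMinOn_iff, isMaxOn_iff, not_forall, not_le, exists_prop] at h
  obtain ⟨⟨p, hp, hpx⟩, ⟨q, hq, hxq⟩⟩ := h
  have hfx : f x ∈ f.toAffineMap '' openSegment 𝕜 p q := by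
    rw [image_openSegment, LinearMap.coe_toAffineMap, openSegment_eq_Ioo (hpx.trans hxq)]
    exact ⟨hpx, hxq⟩
  obtain ⟨m, hm, hmx⟩ := hfx
  obtain rfl := huniq m (hP.openSegment_subset hp hq hm) hmx
  exact hpx.ne (congrArg f (hx.2 hp hq hm))

theorem ncard_le_two_of_forall_eq_of_apply_eq {P S : Set E} (hP : Convex 𝕜 P)
    (f : E →ₗ[𝕜] 𝕜) (hS : S ⊆ P.extremePoints 𝕜) (huniq : ∀ x ∈ S, ∀ p ∈ P, f p = f x → p = x) :
    S.ncard ≤ 2 := by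
  set Smin := {x ∈ S | IsMinOn f P x}
  set Smax := {x ∈ S | IsMaxOn f P x}
  have hcover : S ⊆ Smin ∪ Smax := fun x hx =>
    (isMinOn_or_isMaxOn_of_mem_extremePoints hP f (hS hx) (huniq x hx)).imp (⟨hx, ·⟩) (⟨hx, ·⟩)
  have hmin : Smin.Subsingleton := fun x hx y hy =>
    huniq y hy.1 x (hS hx.1).1 (le_antisymm (hx.2 (hS hy.1).1) (hy.2 (hS hx.1).1))
  have hmax : Smax.Subsingleton := fun x hx y hy =>
    huniq y hy.1 x (hS hx.1).1 (le_antisymm (hy.2 (hS hx.1).1) (hx.2 (hS hy.1).1))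
  calc S.ncard ≤ (Smin ∪ Smax).ncard := ncard_le_ncard hcover (hmin.finite.union hmax.finite)
    _ ≤ Smin.ncard + Smax.ncard := ncard_union_le _ _
    _ ≤ 1 + 1 := add_le_add ((ncard_le_one_iff hmin.finite).2 (hmin · ·))
        ((ncard_le_one_iff hmax.finite).2 (hmax · ·))

end Convex

theorem ncard_le_ncard_add_ncard_inter_of_subset_union_image {α : Type*} {W L R V : Set α}
    {g : α → α} (hg : g.Injective) (hW : W ⊆ L ∪ g '' R) (hL : L ⊆ V) (hR : R ⊆ V)
    (hV : V.Finite) : W.ncard ≤ V.ncard + (L ∩ R).ncard :=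
  calc W.ncard ≤ (L ∪ g '' R).ncard :=
        ncard_le_ncard hW ((hV.subset hL).union ((hV.subset hR).image g))
    _ ≤ L.ncard + (g '' R).ncard := ncard_union_le _ _
    _ = (L ∪ R).ncard + (L ∩ R).ncard := by
        rw [ncard_image_of_injective _ hg, ncard_union_add_ncard_inter _ _ (hV.subset hL)
          (hV.subset hR)]
    _ ≤ V.ncard + (L ∩ R).ncard := by
        gcongr ?_ + _
        exact ncard_le_ncard (union_subset hL hR) hV

theorem M2_mulVec (x : Fin 2 → ℝ) : M2 *ᵥ x = x + x 1 • Pi.single 0 1 := by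
  ext i
  fin_cases i <;> simp [M2, mulVec, dotProduct, Fin.sum_univ_two]

theorem M2_mulVec_injective : Function.Injective M2.mulVec := by
  intro x y hxy
  rw [M2_mulVec, M2_mulVec] at hxy
  have h1 : x 1 = y 1 := by simpa using congrFun hxy 1
  rwa [h1, add_left_inj] at hxy

theorem eq_of_M2_mulVec_mem_extremePoints {P Q : Set (Fin 2 → ℝ)} {v p : Fin 2 → ℝ}
    (hPQ : P ⊆ Q) (hMPQ : M2.mulVec '' P ⊆ Q) (hv : v ∈ Q.extremePoints ℝ)
    (hMv : M2 *ᵥ v ∈ Q.extremePoints ℝ) (hMvv : M2 *ᵥ v ≠ v) (hp : p ∈ P) (hpv : p 1 = v 1) :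
    p = v := by
  set d : Fin 2 → ℝ := v 1 • Pi.single 0 1
  have hv1 : v 1 ≠ 0 := fun h => hMvv (by rw [M2_mulVec, h, zero_smul, add_zero])
  have hd : d ≠ 0 := smul_ne_zero hv1 (by simp)
  set s := (p 0 - v 0) / v 1
  have hp_eq : p = v + s • d := by
    ext i
    fin_cases i
    · simp only [Fin.zero_eta, Fin.isValue, Pi.add_apply, Pi.smul_apply, Pi.single_eq_same,
        smul_eq_mul, mul_one, s, d]
      field_simp
      ring
    · simpa [d] using hpv
  have hs := mem_Icc_of_add_smul_mem hv (M2_mulVec v ▸ hMv) hd (hp_eq ▸ hPQ hp)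
  have hs1 : s + 1 ∈ Icc 0 1 := by
    refine mem_Icc_of_add_smul_mem hv (M2_mulVec v ▸ hMv) hd ?_
    rw [add_smul, one_smul, ← add_assoc, ← hp_eq, show d = p 1 • Pi.single 0 1 by rw [hpv],
      ← M2_mulVec]
    exact hMPQ (mem_image_of_mem _ hp)
  have hs0 : s = 0 := by linarith [hs.1, hs1.2]
  rw [hp_eq, hs0, zero_smul, add_zero]

theorem stmt14_general (P : Set (Fin 2 → ℝ))
    (hpoly : ∃ F : Set (Fin 2 → ℝ), F.Finite ∧ F.Nonempty ∧ P = convexHull ℝ F) :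
    (Set.extremePoints ℝ (convexHull ℝ (P ∪ M2.mulVec '' P))).ncard ≤
      (Set.extremePoints ℝ P).ncard + 2 := by
  obtain ⟨F, hF, -, hPF⟩ := hpoly
  set Q := convexHull ℝ (P ∪ M2.mulVec '' P)
  have hPQ : P ⊆ Q := subset_union_left.trans (subset_convexHull ℝ _)
  have hMPQ : M2.mulVec '' P ⊆ Q := subset_union_right.trans (subset_convexHull ℝ _)
  have hV : (P.extremePoints ℝ).Finite := hF.subset (hPF ▸ extremePoints_convexHull_subset)
  set L := P ∩ Q.extremePoints ℝ
  set R := {v ∈ P | M2 *ᵥ v ∈ Q.extremePoints ℝ \ P}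
  have hcover : Q.extremePoints ℝ ⊆ L ∪ M2.mulVec '' R := by
    intro w hw
    rcases extremePoints_convexHull_subset hw with hwP | ⟨v, hv, rfl⟩
    · exact Or.inl ⟨hwP, hw⟩
    · by_cases hMv : M2 *ᵥ v ∈ P
      · exact Or.inl ⟨hMv, hw⟩
      · exact Or.inr ⟨v, ⟨hv, hw, hMv⟩, rfl⟩
  have hL : L ⊆ P.extremePoints ℝ := inter_extremePoints_subset_extremePoints_of_subset hPQ
  have hR : R ⊆ P.extremePoints ℝ := fun v hv =>
    mem_extremePoints_of_map_mem_extremePoints (g := M2.mulVecLin) M2_mulVec_injective hMPQ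
      hv.1 hv.2.1
  have hLR : (L ∩ R).ncard ≤ 2 :=
    ncard_le_two_of_forall_eq_of_apply_eq (hPF ▸ convex_convexHull ℝ F) (LinearMap.proj 1)
      (fun v hv => hL hv.1) fun v hv _ hp hpv =>
        eq_of_M2_mulVec_mem_extremePoints hPQ hMPQ hv.1.2 hv.2.2.1
          (fun h => hv.2.2.2 (by rw [h]; exact hv.1.1)) hp hpv
  exact (ncard_le_ncard_add_ncard_inter_of_subset_union_image M2_mulVec_injective hcover hL hR
    hV).trans (by omega)

/-- For a polytope `P` contained in the closed upper (or lower) half-plane, the convex hull of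
`P ∪ A₂·P` has at most two more extreme points than `P`. -/
theorem stmt14 (P : Set (Fin 2 → ℝ))
    (hpoly : ∃ F : Set (Fin 2 → ℝ), F.Finite ∧ F.Nonempty ∧ P = convexHull ℝ F)
    (hsign : (∀ x ∈ P, 0 ≤ x 1) ∨ (∀ x ∈ P, x 1 ≤ 0)) :
    (Set.extremePoints ℝ (convexHull ℝ (P ∪ M2.mulVec '' P))).ncard ≤
      (Set.extremePoints ℝ P).ncard + 2 :=
  stmt14_general P hpoly

end
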